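/- The operator L_2 := Σ_{α=1}^{n} Σ_{p≥0} (p + 1/2 + μ_α)(p + 3/2 + μ_α)(p + 5/2 + μ_α)·T^{α,p}∘∂_{α,p+2} + Σ_{α,β=1}^{n} η^{αβ}·(1/2 − μ_α)(1/2 − μ_β)(3/2 − μ_β)·∂_{α,1}∘∂_{β,0} equals V_2 as a linear operator on P. (This is the case j = 2 of the coincidence of the Virasoro operators of the Frobenius manifold of the Coxeter group D_n, expressed in the rescaled time variables, with the operators V_j obtained from vertex operators of the two-component BKP hierarchy.) -/

import Mathlib

open MvPolynomial

noncomputable section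

/-- The polynomial algebra over ℚ in variables `t_{2m+1}` (index `(false, m)`) and
`t̂_{2m+1}` (index `(true, m)`). -/
abbrev PP : Type := MvPolynomial (Bool × ℕ) ℚ

/-- The operator `p_k` (for `b = false`) resp. `p̂_k` (for `b = true`):
`2·∂/∂t_k` for odd positive `k`, multiplication by `(-k)·t_{-k}` for odd negative `k`,
and `0` for even `k`. -/
def pOp (b : Bool) (k : ℤ) : PP → PP := fun q =>
  if 0 < k ∧ Odd k then (2 : ℚ) • pderiv (b, (k.toNat - 1) / 2) q
  else if k < 0 ∧ Odd k then ((-k : ℤ) : ℚ) • (X (b, ((-k).toNat - 1) / 2) * q)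
  else 0

/-- The normal-ordered product `:p_a p_c:`, equal to `p_c ∘ p_a` if `a > 0 > c`
and `p_a ∘ p_c` otherwise. -/
def nord (b : Bool) (a c : ℤ) : PP → PP :=
  if 0 < a ∧ c < 0 then fun q => pOp b c (pOp b a q) else fun q => pOp b a (pOp b c q)

/-- The Virasoro operator
`V_j = (1/(8n-8))·Σ_{i∈ℤ} :p_i p_{(2n-2)j-i}: + (1/8)·Σ_{i∈ℤ} :p̂_i p̂_{2j-i}:
+ δ_{j,0}·(n/24)·(1 + 1/(2n-2))·Id`, acting pointwise (on each polynomial only finitely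
many summands act nontrivially). -/
def Vop (n : ℕ) (j : ℤ) : PP → PP := fun q =>
  (8 * (n : ℚ) - 8)⁻¹ • (∑ᶠ i : ℤ, nord false i ((2 * (n : ℤ) - 2) * j - i) q)
  + (8 : ℚ)⁻¹ • (∑ᶠ i : ℤ, nord true i (2 * j - i) q)
  + (if j = 0 then (n : ℚ) / 24 * (1 + (2 * (n : ℚ) - 2)⁻¹) else 0) • q

/-- For `α ∈ {1,…,n}`, the spectrum `μ_α = (2α-n)/(2n-2)` for `α ≤ n-1` and `μ_n = 0`. -/
def mu (n α : ℕ) : ℚ :=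
  if α = n then 0 else (2 * (α : ℚ) - n) / (2 * (n : ℚ) - 2)

/-- The rescaling constants: `c_{α,p} = (2n-2)·∏_{r=0}^{p}((2α-1)/(2n-2)+r)` for
`α ≤ n-1` and `c_{n,p} = 2·∏_{r=0}^{p}(1/2+r)`. -/
def cc (n α p : ℕ) : ℚ :=
  if α = n then 2 * ∏ r ∈ Finset.range (p + 1), ((1 : ℚ) / 2 + r)
  else (2 * (n : ℚ) - 2) * ∏ r ∈ Finset.range (p + 1), ((2 * (α : ℚ) - 1) / (2 * (n : ℚ) - 2) + r)

/-- The variable corresponding to the time `T^{α,p}`: the variable `t_{(2n-2)p+2α-1}`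
(index `(false, (n-1)p+α-1)`) if `α ≤ n-1`, and `t̂_{2p+1}` (index `(true, p)`) if `α = n`. -/
def vIdx (n α p : ℕ) : Bool × ℕ :=
  if α = n then (true, p) else (false, (n - 1) * p + α - 1)

/-- The operator `T^{α,p}`: multiplication by the rescaled time variable `c_{α,p}·t`. -/
def Tmul (n α p : ℕ) : PP → PP := fun q => cc n α p • (X (vIdx n α p) * q)

/-- The operator `∂_{α,p} = c_{α,p}⁻¹·∂/∂t`, the derivative in the rescaled time variable. -/
def Dop (n α p : ℕ) : PP → PP := fun q => (cc n α p)⁻¹ • pderiv (vIdx n α p) q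

/-- The flat metric: `η_{αβ} = 1/(4n-4)` if `α+β = n`, `η_{nn} = 1/4`, and `0` otherwise. -/
def eta (n α β : ℕ) : ℚ :=
  if α + β = n then (4 * (n : ℚ) - 4)⁻¹ else if α = n ∧ β = n then (4 : ℚ)⁻¹ else 0

/-- The inverse metric: `η^{αβ} = 4n-4` if `α+β = n`, `η^{nn} = 4`, and `0` otherwise. -/
def etaInv (n α β : ℕ) : ℚ :=
  if α + β = n then 4 * (n : ℚ) - 4 else if α = n ∧ β = n then 4 else 0

/-!
Both sides are brought to the same normal form, built from the operators
`E_m = Σ_k k t_k ∂/∂t_{k+2m}` (odd `k`) and second derivatives.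

On the vertex side, the products `:p_i p_{2m-i}:` with `i < 0` and with `i > 2m` both give
`2k t_k ∂/∂t_{k+2m}` with `k = |i|` resp. `k = i - 2m`, so together they form `4 E_m`; those with
`0 < i < 2m` give `4 ∂/∂t_i ∂/∂t_{2m-i}`, and these pair up by symmetry.

On the Frobenius side, `c_{α,p+2} = c_{α,p} (p+3/2+μ_α) (p+5/2+μ_α)` collapses the cubic
coefficient of `T^{α,p} ∂_{α,p+2}` to `p + 1/2 + μ_α`, which is `k/(2n-2)` for `α < n` and
`t_k` the variable of `T^{α,p}`, i.e. `k = (2n-2)p + 2α - 1`; as `(α, p)` runs over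
`{1,…,n-1} × ℕ`, `k` runs over all odd numbers exactly once. For `α = n` it is `k/2` with
`k = 2p + 1`. In the `η`-term the factor `1/(c_{α,1} c_{n-α,0})` cancels all `μ`-dependence.
-/

open Finset

theorem pderiv_pderiv_comm {σ R : Type*} [CommRing R] (i j : σ) (p : MvPolynomial σ R) :
    pderiv i (pderiv j p) = pderiv j (pderiv i p) := by
  classical
  have h : ⁅(pderiv i : Derivation R (MvPolynomial σ R) _), pderiv j⁆ = 0 :=
    derivation_ext fun k => by
      rw [Derivation.commutator_apply, pderiv_X, pderiv_X, Pi.single_apply, Pi.single_apply]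
      split_ifs <;> simp
  simpa [Derivation.commutator_apply, sub_eq_zero] using congrArg (· p) h

theorem exists_pderiv_eq_zero {ι R : Type*} [CommSemiring R] (q : MvPolynomial (ι × ℕ) R) :
    ∃ D, ∀ i j, D ≤ j → pderiv (i, j) q = 0 := by
  refine ⟨q.vars.sup Prod.snd + 1, fun i j hj => pderiv_eq_zero_of_notMem_vars fun h => ?_⟩
  have := le_sup (f := Prod.snd) h
  simp only at this
  omega

theorem sum_Icc_one_eq_sum_range_add {M : Type*} [AddCommMonoid M] {n : ℕ} (hn : n ≠ 0)
    (f : ℕ → M) : ∑ a ∈ Icc 1 n, f a = ∑ s ∈ range (n - 1), f (s + 1) + f n := by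
  obtain ⟨k, rfl⟩ := Nat.exists_eq_add_one_of_ne_zero hn
  rw [sum_Icc_succ_top (by omega), Nat.add_sub_cancel, range_eq_Ico, sum_Ico_add' f]
  rfl

theorem sum_range_two_mul_of_symm {M : Type*} [AddCommMonoid M] (f : ℕ → ℕ → M)
    (hf : ∀ a b, f a b = f b a) (k : ℕ) :
    ∑ s ∈ range (2 * k), f s (2 * k - 1 - s) = 2 • ∑ s ∈ range k, f (k + s) (k - 1 - s) := by
  rw [two_mul, sum_range_add, ← sum_range_reflect, two_nsmul]
  congr 1 <;> refine sum_congr rfl fun s hs => ?_ <;> rw [mem_range] at hs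
  · rw [hf]
    congr 1; omega
  · congr 1; omega

theorem finsum_eq_sum_range_finsum {M : Type*} [AddCommMonoid M] {k : ℕ} (hk : k ≠ 0)
    {F : ℕ → M} (hF : F.HasFiniteSupport) :
    ∑ᶠ j, F j = ∑ r ∈ range k, ∑ᶠ p, F (k * p + r) := by
  have : NeZero k := ⟨hk⟩
  set e := ((Nat.divModEquiv k).trans (Equiv.prodComm _ _)).symm
  rw [← finsum_comp_equiv e, finsum_curry, finsum_eq_sum_of_fintype, ← Fin.sum_univ_eq_sum_range]
  · simp [e, mul_comm]
  · exact hF.preimage e.injective.injOn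

theorem pOp_apply_zero (b : Bool) (k : ℤ) : pOp b k 0 = 0 := by
  unfold pOp; split_ifs <;> simp

theorem pOp_of_not_odd {k : ℤ} (hk : ¬Odd k) (b : Bool) (q : PP) : pOp b k q = 0 := by
  simp [pOp, hk]

theorem pOp_two_mul_add_one (b : Bool) (j : ℕ) (q : PP) :
    pOp b (2 * j + 1) q = (2 : ℚ) • pderiv (b, j) q := by
  rw [pOp, if_pos ⟨by positivity, odd_two_mul_add_one _⟩,
    show ((2 * (j : ℤ) + 1).toNat - 1) / 2 = j by omega]

theorem pOp_neg_two_mul_add_one (b : Bool) (j : ℕ) (q : PP) :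
    pOp b (-(2 * j + 1)) q = (2 * j + 1 : ℚ) • (X (b, j) * q) := by
  rw [pOp, if_neg (by omega), if_pos ⟨by omega, by rw [odd_neg]; exact odd_two_mul_add_one _⟩,
    show ((-(-(2 * (j : ℤ) + 1))).toNat - 1) / 2 = j by omega]
  push_cast
  ring_nf

theorem nord_of_not_odd {a : ℤ} (ha : ¬Odd a) (b : Bool) (c : ℤ) (q : PP) : nord b a c q = 0 := by
  unfold nord; split_ifs <;> simp [pOp_of_not_odd ha, pOp_apply_zero]

theorem nord_neg_pos (b : Bool) (j k : ℕ) (q : PP) :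
    nord b (-(2 * j + 1)) (2 * k + 1) q = (2 * (2 * j + 1) : ℚ) • (X (b, j) * pderiv (b, k) q) := by
  rw [nord, if_neg (by omega), pOp_two_mul_add_one, pOp_neg_two_mul_add_one, mul_smul_comm,
    smul_smul]
  ring_nf

theorem nord_pos_neg (b : Bool) (j k : ℕ) (q : PP) :
    nord b (2 * k + 1) (-(2 * j + 1)) q = (2 * (2 * j + 1) : ℚ) • (X (b, j) * pderiv (b, k) q) := by
  rw [nord, if_pos ⟨by omega, by omega⟩, pOp_two_mul_add_one, pOp_neg_two_mul_add_one,
    mul_smul_comm, smul_smul]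
  ring_nf

theorem nord_pos_pos (b : Bool) (s t : ℕ) (q : PP) :
    nord b (2 * s + 1) (2 * t + 1) q = (4 : ℚ) • pderiv (b, s) (pderiv (b, t) q) := by
  rw [nord, if_neg (by omega), pOp_two_mul_add_one, pOp_two_mul_add_one, Derivation.map_smul,
    smul_smul]
  norm_num

/-- The operator `Σ_k k t_k ∂/∂t_{k+2m}` over odd `k = 2j+1` (resp. with `t̂` for `b = true`). -/
def eulerShift (b : Bool) (m : ℕ) (q : PP) : PP :=
  ∑ᶠ j : ℕ, (2 * j + 1 : ℚ) • (X (b, j) * pderiv (b, j + m) q)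

theorem support_eulerShift_subset {b : Bool} {q : PP} {D : ℕ}
    (hD : ∀ j, D ≤ j → pderiv (b, j) q = 0) (m : ℕ) :
    Function.support (fun j : ℕ => (2 * j + 1 : ℚ) • (X (b, j) * pderiv (b, j + m) q))
      ⊆ range D := by
  intro j hj
  simp only [Function.mem_support, coe_range, Set.mem_Iio] at hj ⊢
  by_contra hjD
  exact hj (by rw [hD _ (by omega), mul_zero, smul_zero])

theorem eulerShift_eq_sum_range {b : Bool} {q : PP} {D : ℕ}
    (hD : ∀ j, D ≤ j → pderiv (b, j) q = 0) (m : ℕ) :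
    eulerShift b m q = ∑ j ∈ range D, (2 * j + 1 : ℚ) • (X (b, j) * pderiv (b, j + m) q) :=
  finsum_eq_sum_of_support_subset _ (support_eulerShift_subset hD m)

theorem support_nord_subset (b : Bool) (m : ℕ) {q : PP} {D : ℕ}
    (hD : ∀ j, D ≤ j → pderiv (b, j) q = 0) :
    Function.support (fun i : ℤ => nord b i (2 * m - i) q)
      ⊆ (range (D + (m + D))).image (fun k : ℕ => 2 * (k : ℤ) + 1 - 2 * D) := by
  intro i hi
  simp only [Function.mem_support] at hi
  by_cases hodd : Odd i
  swap
  · exact absurd (nord_of_not_odd hodd b _ q) hi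
  obtain ⟨k, rfl⟩ := hodd
  have hlow : 0 ≤ k + D := by
    by_contra hneg
    obtain ⟨j, hj⟩ : ∃ j : ℕ, k = -j - 1 := ⟨(-k - 1).toNat, by omega⟩
    apply hi
    rw [show 2 * k + 1 = -(2 * (j : ℤ) + 1) by omega,
      show 2 * (m : ℤ) - -(2 * j + 1) = 2 * ((j + m : ℕ) : ℤ) + 1 by push_cast; ring,
      nord_neg_pos, hD _ (by omega), mul_zero, smul_zero]
  have hhigh : k < D + m := by
    by_contra hk
    obtain ⟨j, hj⟩ : ∃ j : ℕ, k = j + m := ⟨(k - m).toNat, by omega⟩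
    apply hi
    rw [show 2 * k + 1 = 2 * ((j + m : ℕ) : ℤ) + 1 by push_cast; omega,
      show 2 * (m : ℤ) - (2 * ((j + m : ℕ) : ℤ) + 1) = -(2 * j + 1) by push_cast; ring,
      nord_pos_neg, hD _ (by omega), mul_zero, smul_zero]
  simp only [coe_image, coe_range, Set.mem_image, Set.mem_Iio]
  exact ⟨(k + D).toNat, by omega, by omega⟩

theorem finsum_nord_eq (b : Bool) (m : ℕ) (q : PP) :
    ∑ᶠ i : ℤ, nord b i (2 * m - i) q
      = (4 : ℚ) • eulerShift b m q
        + (4 : ℚ) • ∑ s ∈ range m, pderiv (b, s) (pderiv (b, m - 1 - s) q) := by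
  obtain ⟨D, hD⟩ := exists_pderiv_eq_zero q
  rw [finsum_eq_sum_of_support_subset _ (support_nord_subset b m (hD b)),
    sum_image fun _ _ _ _ h => by simpa using h, sum_range_add, sum_range_add,
    ← sum_range_reflect, eulerShift_eq_sum_range (hD b), smul_sum, smul_sum, add_left_comm,
    ← sum_add_distrib, add_comm]
  congr 1 <;> refine sum_congr rfl fun x hx => ?_ <;> rw [mem_range] at hx
  · rw [show 2 * ((D - 1 - x : ℕ) : ℤ) + 1 - 2 * D = -(2 * x + 1) by omega,
      show 2 * ((D + (m + x) : ℕ) : ℤ) + 1 - 2 * D = 2 * ((x + m : ℕ) : ℤ) + 1 by push_cast; ring,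
      show 2 * (m : ℤ) - -(2 * x + 1) = 2 * ((x + m : ℕ) : ℤ) + 1 by push_cast; ring,
      show 2 * (m : ℤ) - (2 * ((x + m : ℕ) : ℤ) + 1) = -(2 * x + 1) by push_cast; ring,
      nord_neg_pos, nord_pos_neg, ← add_smul, smul_smul]
    congr 1; ring
  · rw [show 2 * ((D + x : ℕ) : ℤ) + 1 - 2 * D = 2 * x + 1 by push_cast; ring,
      show 2 * (m : ℤ) - (2 * x + 1) = 2 * ((m - 1 - x : ℕ) : ℤ) + 1 by omega, nord_pos_pos]

theorem sum_range_pderiv_pderiv (b : Bool) (k : ℕ) (q : PP) :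
    ∑ s ∈ range (2 * k), pderiv (b, s) (pderiv (b, 2 * k - 1 - s) q)
      = 2 • ∑ s ∈ range k, pderiv (b, k + s) (pderiv (b, k - 1 - s) q) :=
  sum_range_two_mul_of_symm (fun s t => pderiv (b, s) (pderiv (b, t) q))
    (fun _ _ => pderiv_pderiv_comm _ _ q) k

theorem Vop_two_eq {n : ℕ} (hn : 2 ≤ n) (q : PP) :
    Vop n 2 q = (2 * ((n : ℚ) - 1))⁻¹ • eulerShift false (2 * (n - 1)) q
      + (2 : ℚ)⁻¹ • eulerShift true 2 q
      + ((n : ℚ) - 1)⁻¹ • ∑ s ∈ range (n - 1),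
          pderiv (false, n - 1 + s) (pderiv (false, n - 1 - 1 - s) q)
      + pderiv (true, 1) (pderiv (true, 0) q) := by
  have hF := finsum_nord_eq false (2 * (n - 1)) q
  have hT := finsum_nord_eq true (2 * 1) q
  rw [sum_range_pderiv_pderiv] at hF hT
  have hcast : ((2 * (n - 1) : ℕ) : ℤ) = 2 * n - 2 := by omega
  simp only [hcast, Nat.cast_ofNat, mul_one, sum_range_one, Nat.add_zero, Nat.sub_self] at hF hT
  rw [Vop, if_neg (by norm_num), zero_smul, add_zero, mul_comm _ (2 : ℤ), hF, hT,
    show 8 * (n : ℚ) - 8 = 8 * ((n : ℚ) - 1) by ring, mul_inv, mul_inv]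
  module

theorem mu_self (n : ℕ) : mu n n = 0 := if_pos rfl

theorem half_add_mu_of_ne {n α : ℕ} (hn : 2 ≤ n) (hα : α ≠ n) :
    1 / 2 + mu n α = (2 * α - 1) / (2 * n - 2) := by
  have : (2 * n - 2 : ℚ) ≠ 0 := by
    have : (2 : ℚ) ≤ n := by exact_mod_cast hn
    linarith
  rw [mu, if_neg hα, div_add_div _ _ two_ne_zero this,
    div_eq_div_iff (mul_ne_zero two_ne_zero this) this]
  ring

theorem half_add_mu_pos {n α : ℕ} (hn : 2 ≤ n) (hα : 1 ≤ α) : 0 < 1 / 2 + mu n α := by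
  rcases eq_or_ne α n with rfl | hαn
  · norm_num [mu_self]
  rw [half_add_mu_of_ne hn hαn]
  have : (2 : ℚ) ≤ n := by exact_mod_cast hn
  have : (1 : ℚ) ≤ α := by exact_mod_cast hα
  apply div_pos <;> linarith

theorem mu_add_mu {n α β : ℕ} (hn : 2 ≤ n) (h : α + β = n) (hα : α ≠ n) (hβ : β ≠ n) :
    mu n α + mu n β = 0 := by
  have : (2 * n - 2 : ℚ) ≠ 0 := by
    have : (2 : ℚ) ≤ n := by exact_mod_cast hn
    linarith
  rw [mu, mu, if_neg hα, if_neg hβ, ← add_div, div_eq_zero_iff]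
  left
  rw [← h]; push_cast; ring

theorem cc_zero_of_ne {n α : ℕ} (hn : 2 ≤ n) (hα : α ≠ n) :
    cc n α 0 = (2 * n - 2) * (1 / 2 + mu n α) := by
  rw [cc, if_neg hα, prod_range_one, half_add_mu_of_ne hn hα, Nat.cast_zero, add_zero]

theorem cc_succ {n : ℕ} (hn : 2 ≤ n) (α p : ℕ) :
    cc n α (p + 1) = cc n α p * (p + 3 / 2 + mu n α) := by
  rw [cc, cc]
  split_ifs with hα
  · rw [prod_range_succ _ (p + 1)]
    push_cast [hα, mu_self]; ring
  · rw [prod_range_succ _ (p + 1), mul_assoc,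
      show (p + 3 / 2 + mu n α : ℚ) = 1 / 2 + mu n α + (p + 1) by ring, half_add_mu_of_ne hn hα]
    push_cast; ring

theorem cc_pos {n α : ℕ} (hn : 2 ≤ n) (hα : 1 ≤ α) (p : ℕ) : 0 < cc n α p := by
  have hμ := half_add_mu_pos hn hα
  induction p with
  | zero =>
    rcases eq_or_ne α n with rfl | hαn
    · norm_num [cc]
    · rw [cc_zero_of_ne hn hαn]
      have : (2 : ℚ) ≤ n := by exact_mod_cast hn
      apply mul_pos <;> linarith
  | succ p ih =>
    rw [cc_succ hn]
    have : (0 : ℚ) ≤ p := p.cast_nonneg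
    apply mul_pos ih; linarith

theorem smul_Tmul_Dop_eq {n α : ℕ} (hn : 2 ≤ n) (hα : 1 ≤ α) (p : ℕ) (q : PP) :
    (((p : ℚ) + 1 / 2 + mu n α) * ((p : ℚ) + 3 / 2 + mu n α) * ((p : ℚ) + 5 / 2 + mu n α)) •
        Tmul n α p (Dop n α (p + 2) q)
      = ((p : ℚ) + 1 / 2 + mu n α) • (X (vIdx n α p) * pderiv (vIdx n α (p + 2)) q) := by
  have hμ := half_add_mu_pos hn hα
  have hc := (cc_pos hn hα p).ne'
  have : (0 : ℚ) ≤ p := p.cast_nonneg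
  have h₁ : (p : ℚ) + 3 / 2 + mu n α ≠ 0 := by linarith
  have h₂ : (p : ℚ) + 5 / 2 + mu n α ≠ 0 := by linarith
  have hcc : cc n α (p + 2) = cc n α p * (p + 3 / 2 + mu n α) * (p + 5 / 2 + mu n α) := by
    rw [cc_succ hn, cc_succ hn]; push_cast; ring
  rw [Tmul, Dop, hcc, mul_smul_comm, smul_smul, smul_smul]
  congr 1
  generalize (p : ℚ) + 3 / 2 + mu n α = a at h₁
  generalize (p : ℚ) + 5 / 2 + mu n α = b at h₂
  field_simp

theorem finsum_smul_Tmul_Dop_self {n : ℕ} (hn : 2 ≤ n) (q : PP) :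
    ∑ᶠ p : ℕ, (((p : ℚ) + 1 / 2 + mu n n) * ((p : ℚ) + 3 / 2 + mu n n) *
        ((p : ℚ) + 5 / 2 + mu n n)) • Tmul n n p (Dop n n (p + 2) q)
      = (2 : ℚ)⁻¹ • eulerShift true 2 q := by
  rw [eulerShift, smul_finsum]
  refine finsum_congr fun p => ?_
  rw [smul_Tmul_Dop_eq hn (by omega), smul_smul, vIdx, vIdx, if_pos rfl, if_pos rfl, mu_self]
  congr 1
  ring

theorem sum_finsum_smul_Tmul_Dop_of_lt {n : ℕ} (hn : 2 ≤ n) (q : PP) :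
    ∑ s ∈ range (n - 1), ∑ᶠ p : ℕ, (((p : ℚ) + 1 / 2 + mu n (s + 1)) *
        ((p : ℚ) + 3 / 2 + mu n (s + 1)) * ((p : ℚ) + 5 / 2 + mu n (s + 1))) •
          Tmul n (s + 1) p (Dop n (s + 1) (p + 2) q)
      = (2 * ((n : ℚ) - 1))⁻¹ • eulerShift false (2 * (n - 1)) q := by
  obtain ⟨D, hD⟩ := exists_pderiv_eq_zero q
  have hfin := (range D).finite_toSet.subset (support_eulerShift_subset (hD false) (2 * (n - 1)))
  rw [eulerShift, finsum_eq_sum_range_finsum (k := n - 1) (by omega) hfin, smul_sum]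
  refine sum_congr rfl fun s hs => ?_
  rw [smul_finsum]
  refine finsum_congr fun p => ?_
  rw [mem_range] at hs
  have hs' : s + 1 ≠ n := by omega
  rw [smul_Tmul_Dop_eq hn (by omega), vIdx, vIdx, if_neg hs', if_neg hs', smul_smul, add_assoc,
    half_add_mu_of_ne hn hs', show (n - 1) * p + (s + 1) - 1 = (n - 1) * p + s by omega,
    show (n - 1) * (p + 2) + (s + 1) - 1 = (n - 1) * p + s + 2 * (n - 1) by rw [Nat.mul_add]; omega]
  congr 1
  have : (2 : ℚ) ≤ n := by exact_mod_cast hn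
  have : (n : ℚ) - 1 ≠ 0 := by linarith
  push_cast [Nat.cast_sub (by omega : 1 ≤ n)]
  field_simp
  ring

theorem sum_etaInv_smul_Dop_Dop_self {n : ℕ} (hn : 2 ≤ n) (q : PP) :
    ∑ β ∈ Icc 1 n, (etaInv n n β * (1 / 2 - mu n n) * (1 / 2 - mu n β) * (3 / 2 - mu n β)) •
        Dop n n 1 (Dop n β 0 q)
      = pderiv (true, 1) (pderiv (true, 0) q) := by
  rw [sum_eq_single_of_mem n (by simp; omega) fun β hβ hβn => by
    rw [etaInv, if_neg (by simp at hβ; omega), if_neg (by tauto)]; simp]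
  have hc₀ : cc n n 0 = 1 := by norm_num [cc]
  have hc₁ : cc n n 1 = 3 / 2 := by rw [cc_succ hn, hc₀, mu_self]; norm_num
  rw [Dop, Dop, vIdx, vIdx, if_pos rfl, if_pos rfl, hc₀, hc₁, etaInv, if_neg (by omega),
    if_pos ⟨rfl, rfl⟩, mu_self, Derivation.map_smul, smul_smul, smul_smul]
  norm_num

theorem sum_etaInv_smul_Dop_Dop_of_lt {n s : ℕ} (hn : 2 ≤ n) (hs : s < n - 1) (q : PP) :
    ∑ β ∈ Icc 1 n, (etaInv n (s + 1) β * (1 / 2 - mu n (s + 1)) * (1 / 2 - mu n β) *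
        (3 / 2 - mu n β)) • Dop n (s + 1) 1 (Dop n β 0 q)
      = ((n : ℚ) - 1)⁻¹ • pderiv (false, n - 1 + s) (pderiv (false, n - 1 - 1 - s) q) := by
  rw [sum_eq_single_of_mem (n - 1 - s) (by simp; omega) fun β hβ hβn => by
    simp [etaInv, show s + 1 + β ≠ n by omega, show s + 1 ≠ n by omega]]
  have hα : s + 1 ≠ n := by omega
  have hβ : n - 1 - s ≠ n := by omega
  have hμ : mu n (n - 1 - s) = - mu n (s + 1) :=
    eq_neg_of_add_eq_zero_right (mu_add_mu hn (by omega) hα hβ)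
  have hc₁ : cc n (s + 1) 1 = (2 * n - 2) * (1 / 2 + mu n (s + 1)) * (3 / 2 + mu n (s + 1)) := by
    rw [cc_succ hn, cc_zero_of_ne hn hα]; push_cast; ring
  have hpos₁ := half_add_mu_pos hn (α := s + 1) (by omega)
  have hpos₂ := half_add_mu_pos hn (α := n - 1 - s) (by omega)
  rw [hμ] at hpos₂
  have hn' : (2 : ℚ) ≤ n := by exact_mod_cast hn
  rw [Dop, Dop, vIdx, vIdx, if_neg hα, if_neg hβ, hc₁, cc_zero_of_ne hn hβ, hμ, etaInv,
    if_pos (by omega), Derivation.map_smul, smul_smul, smul_smul,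
    show (n - 1) * 1 + (s + 1) - 1 = n - 1 + s by omega,
    show (n - 1) * 0 + (n - 1 - s) - 1 = n - 1 - 1 - s by omega]
  congr 1
  generalize mu n (s + 1) = x at hpos₁ hpos₂
  simp only [sub_neg_eq_add, ← sub_eq_add_neg]
  have : (1 + 2 * x : ℚ) ≠ 0 := by linarith
  have : (1 - 2 * x : ℚ) ≠ 0 := by linarith
  have : (3 + 2 * x : ℚ) ≠ 0 := by linarith
  have : (n : ℚ) - 1 ≠ 0 := by linarith
  have : (2 * n - 2 : ℚ) ≠ 0 := by linarith
  field_simp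
  ring

/-- the Virasoro operator
`L_2 = Σ_α Σ_{p≥0} (p+1/2+μ_α)(p+3/2+μ_α)(p+5/2+μ_α)·T^{α,p}∘∂_{α,p+2}
+ Σ_{α,β} η^{αβ}·(1/2-μ_α)(1/2-μ_β)(3/2-μ_β)·∂_{α,1}∘∂_{β,0}`
of the Frobenius manifold of the Coxeter group `D_n` equals `V_2`. -/
theorem L_two_eq_V_two (n : ℕ) (hn : 3 ≤ n) (q : PP) :
    (∑ α ∈ Finset.Icc 1 n, ∑ᶠ p : ℕ,
        (((p : ℚ) + 1 / 2 + mu n α) * ((p : ℚ) + 3 / 2 + mu n α) *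
            ((p : ℚ) + 5 / 2 + mu n α)) •
          Tmul n α p (Dop n α (p + 2) q))
      + ∑ α ∈ Finset.Icc 1 n, ∑ β ∈ Finset.Icc 1 n,
          (etaInv n α β * (1 / 2 - mu n α) * (1 / 2 - mu n β) * (3 / 2 - mu n β)) •
            Dop n α 1 (Dop n β 0 q)
      = Vop n 2 q := by
  have h2 : 2 ≤ n := by omega
  rw [sum_Icc_one_eq_sum_range_add (by omega), sum_Icc_one_eq_sum_range_add (by omega),
    sum_finsum_smul_Tmul_Dop_of_lt h2, finsum_smul_Tmul_Dop_self h2,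
    sum_etaInv_smul_Dop_Dop_self h2,
    sum_congr rfl fun s hs => sum_etaInv_smul_Dop_Dop_of_lt h2 (mem_range.mp hs) q, ← smul_sum,
    Vop_two_eq h2]
  abel

end
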